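/- arXiv:1602.07120 — 2 statements merged into one kernel-verified Lean document; each statement's English description precedes it below -/
import Mathlib

section
/- If each f_h : 2^(X×Y) → ℝ₊ (h ∈ H, H finite and nonempty) is monotone non-decreasing and submodular and Q > 0, then the function F̄(S) = (1/|H|)·(Q·|H \ VS(S)| + Σ_{h ∈ VS(S)} min(Q, f_h(S))) is monotone non-decreasing and submodular. -/
/-- Version space induced by a set of action-response pairs. -/
def VS {X Y : Type*} [DecidableEq Y] (H : Finset (X → Y)) (S : Finset (X × Y)) :
    Finset (X → Y) :=
  H.filter (fun h => ∀ p ∈ S, h p.1 = p.2)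

lemma mem_VS {X Y : Type*} [DecidableEq Y] {H : Finset (X → Y)} {S : Finset (X × Y)}
    {h : X → Y} : h ∈ VS H S ↔ h ∈ H ∧ ∀ p ∈ S, h p.1 = p.2 := Finset.mem_filter

lemma VS_subset {X Y : Type*} [DecidableEq Y] (H : Finset (X → Y)) (S : Finset (X × Y)) :
    VS H S ⊆ H := Finset.filter_subset _ _

lemma VS_anti {X Y : Type*} [DecidableEq Y] {H : Finset (X → Y)} {A B : Finset (X × Y)}
    (hAB : A ⊆ B) : VS H B ⊆ VS H A := by
  intro h hh
  rw [mem_VS] at *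
  exact ⟨hh.1, fun p hp => hh.2 p (hAB hp)⟩

lemma mem_VS_insert {X Y : Type*} [DecidableEq X] [DecidableEq Y] {H : Finset (X → Y)}
    {S : Finset (X × Y)} {p : X × Y} {h : X → Y} :
    h ∈ VS H (insert p S) ↔ h ∈ VS H S ∧ h p.1 = p.2 := by
  simp only [mem_VS, Finset.mem_insert]
  constructor
  · rintro ⟨h1, h2⟩
    exact ⟨⟨h1, fun q hq => h2 q (Or.inr hq)⟩, h2 p (Or.inl rfl)⟩
  · rintro ⟨⟨h1, h2⟩, h3⟩
    refine ⟨h1, fun q hq => ?_⟩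
    rcases hq with hq | hq
    · subst hq; exact h3
    · exact h2 q hq

/-- Truncation by `min Q ·` preserves submodular differences of monotone functions. -/
lemma trunc_sub {Q a a' b b' : ℝ} (haa : a ≤ a') (hbb : b ≤ b') (hab : a ≤ b)
    (hs : b' - b ≤ a' - a) : min Q b' - min Q b ≤ min Q a' - min Q a := by
  rcases le_or_gt Q b with hb | hb
  · rw [min_eq_left (hb.trans hbb), min_eq_left hb]
    have := min_le_min (le_refl Q) haa
    linarith
  · have hbmin : min Q b = b := min_eq_right hb.le
    have hamin : min Q a = a := min_eq_right (hab.trans hb.le)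
    rcases le_or_gt Q a' with ha' | ha'
    · rw [hbmin, hamin, min_eq_left ha']
      have : min Q b' ≤ Q := min_le_left _ _
      linarith
    · rw [hbmin, hamin, min_eq_right ha'.le]
      have : min Q b' ≤ b' := min_le_right _ _
      linarith

/-- The aggregate objective `F̄` of Guillory and Bilmes is monotone
non-decreasing and submodular whenever each `f h` is. -/
theorem Fbar_monotone_submodular {X Y : Type*} [Fintype X] [DecidableEq X] [DecidableEq Y]
    (H : Finset (X → Y)) (hH : H.Nonempty) (Q : ℝ) (hQ : 0 < Q)
    (f : (X → Y) → Finset (X × Y) → ℝ)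
    (hnonneg : ∀ h ∈ H, ∀ S, 0 ≤ f h S)
    (hmono : ∀ h ∈ H, ∀ A B : Finset (X × Y), A ⊆ B → f h A ≤ f h B)
    (hsub : ∀ h ∈ H, ∀ (p : X × Y) (A B : Finset (X × Y)), A ⊆ B →
      f h (insert p B) - f h B ≤ f h (insert p A) - f h A)
    (Fbar : Finset (X × Y) → ℝ)
    (hFbar : ∀ S, Fbar S = (1 / (H.card : ℝ)) *
      (Q * ((H \ VS H S).card : ℝ) + ∑ h ∈ VS H S, min Q (f h S))) :
    (∀ A B : Finset (X × Y), A ⊆ B → Fbar A ≤ Fbar B) ∧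
    (∀ (p : X × Y) (A B : Finset (X × Y)), A ⊆ B →
      Fbar (insert p B) - Fbar B ≤ Fbar (insert p A) - Fbar A) := by
  set g : (X → Y) → Finset (X × Y) → ℝ :=
    fun h S => if h ∈ VS H S then min Q (f h S) else Q with hg
  have hc : (0:ℝ) ≤ 1 / (H.card : ℝ) := by positivity
  -- Fbar is the average of g
  have hF : ∀ S, Fbar S = (1 / (H.card : ℝ)) * ∑ h ∈ H, g h S := by
    intro S
    rw [hFbar S]
    congr 1
    rw [← Finset.sum_sdiff (VS_subset H S)]
    congr 1
    · rw [Finset.sum_congr rfl (fun h hh => ?_), Finset.sum_const, nsmul_eq_mul, mul_comm]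
      simp only [hg, if_neg (Finset.mem_sdiff.mp hh).2]
    · exact (Finset.sum_congr rfl (fun h hh => by simp only [hg, if_pos hh])).symm
  -- g bounded above by Q
  have hgQ : ∀ h S, g h S ≤ Q := by
    intro h S
    simp only [hg]
    split
    · exact min_le_left _ _
    · exact le_refl Q
  -- g monotone in S (for h ∈ H)
  have hgmono : ∀ h ∈ H, ∀ A B : Finset (X × Y), A ⊆ B → g h A ≤ g h B := by
    intro h hh A B hAB
    simp only [hg]
    by_cases hB : h ∈ VS H B
    · rw [if_pos hB, if_pos (VS_anti hAB hB)]
      exact min_le_min (le_refl Q) (hmono h hh A B hAB)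
    · rw [if_neg hB]
      split
      · exact min_le_left _ _
      · exact le_refl Q
  -- g submodular in S (for h ∈ H)
  have hgsub : ∀ h ∈ H, ∀ (p : X × Y) (A B : Finset (X × Y)), A ⊆ B →
      g h (insert p B) - g h B ≤ g h (insert p A) - g h A := by
    intro h hh p A B hAB
    by_cases hA : h ∈ VS H A
    · have hAQ : g h A = min Q (f h A) := if_pos hA
      by_cases hp : h p.1 = p.2
      · -- h consistent with p
        have hA' : h ∈ VS H (insert p A) := mem_VS_insert.mpr ⟨hA, hp⟩
        have hA'Q : g h (insert p A) = min Q (f h (insert p A)) := if_pos hA'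
        by_cases hB : h ∈ VS H B
        · have hB' : h ∈ VS H (insert p B) := mem_VS_insert.mpr ⟨hB, hp⟩
          rw [hAQ, hA'Q, show g h B = min Q (f h B) from if_pos hB,
            show g h (insert p B) = min Q (f h (insert p B)) from if_pos hB']
          exact trunc_sub (hmono h hh A (insert p A) (Finset.subset_insert p A))
            (hmono h hh B (insert p B) (Finset.subset_insert p B))
            (hmono h hh A B hAB) (hsub h hh p A B hAB)
        · have hB' : h ∉ VS H (insert p B) := fun hc => hB (mem_VS_insert.mp hc).1
          rw [hAQ, hA'Q, show g h B = Q from if_neg hB,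
            show g h (insert p B) = Q from if_neg hB']
          have := min_le_min (le_refl Q) (hmono h hh A (insert p A) (Finset.subset_insert p A))
          linarith
      · -- h inconsistent with p
        have hA' : h ∉ VS H (insert p A) := fun hc => hp (mem_VS_insert.mp hc).2
        have hB' : h ∉ VS H (insert p B) := fun hc => hp (mem_VS_insert.mp hc).2
        rw [hAQ, show g h (insert p A) = Q from if_neg hA',
          show g h (insert p B) = Q from if_neg hB']
        have h1 : g h B ≥ g h A := hgmono h hh A B hAB
        have h2 : g h A = min Q (f h A) := hAQ
        linarith [hgmono h hh A B hAB]
    · have hB : h ∉ VS H B := fun hc => hA (VS_anti hAB hc)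
      have hA' : h ∉ VS H (insert p A) := fun hc => hA (mem_VS_insert.mp hc).1
      have hB' : h ∉ VS H (insert p B) := fun hc => hB (mem_VS_insert.mp hc).1
      rw [show g h A = Q from if_neg hA, show g h B = Q from if_neg hB,
        show g h (insert p A) = Q from if_neg hA',
        show g h (insert p B) = Q from if_neg hB']
  constructor
  · intro A B hAB
    rw [hF A, hF B]
    exact mul_le_mul_of_nonneg_left
      (Finset.sum_le_sum (fun h hh => hgmono h hh A B hAB)) hc
  · intro p A B hAB
    rw [hF A, hF B, hF (insert p A), hF (insert p B), ← mul_sub, ← mul_sub,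
      ← Finset.sum_sub_distrib, ← Finset.sum_sub_distrib]
    exact mul_le_mul_of_nonneg_left
      (Finset.sum_le_sum (fun h hh => hgsub h hh p A B hAB)) hc
end

section
/- (Greedy progress implies logarithmic cost bound — abstract form) Let Q > 0, η > 0, β ≥ 1, OPT > 0. Suppose a sequence of values v_0 = 0 ≤ v_1 ≤ … ≤ v_T ≤ Q and positive costs c_1, …, c_T satisfy: for each t < T with v_t < Q, v_{t+1} − v_t ≥ c_{t+1}·(Q − v_t)/(β·OPT); each c_t ≤ β·OPT; v_T ≥ Q but v_{T−1} < Q; and whenever v_t ≥ Q − η it holds that v_t ≥ Q. Then Σ_{t=1}^{T} c_t ≤ β·(ln(Q/η) + 1)·OPT. -/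
/-!
Track the residual `Q - v t`. The progress condition says that a step of cost `c` shrinks the
residual by at least the fraction `c / (β OPT)`, and since `1 - x⁻¹ ≤ log x` such a step lowers
`log (Q - v t)` by at least `c / (β OPT)`. Summing over all steps but the last, the logarithm of
the residual falls from `log Q` to no less than `log η` (the residual before the last step is
at least `η` because of the gap condition), so these steps cost at most `β OPT log (Q / η)`;
the last step costs at most `β OPT`.
-/

open Finset Real

theorem sub_div_le_log_sub_log {a b : ℝ} (ha : 0 < a) (hb : 0 < b) :
    (a - b) / a ≤ log a - log b := by
  have h := one_sub_inv_le_log_of_pos (div_pos ha hb)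
  rwa [inv_div, log_div ha.ne' hb.ne', ← div_self ha.ne', ← sub_div] at h

theorem le_mul_log_sub_log_of_div_le_sub {B c r r' : ℝ} (hB : 0 < B) (hr : 0 < r)
    (hr' : 0 < r') (h : c * r / B ≤ r - r') : c ≤ B * (log r - log r') :=
  calc c ≤ B * ((r - r') / r) := by
        rw [div_le_iff₀ hB] at h
        rw [mul_div_assoc', le_div_iff₀ hr]
        linarith
    _ ≤ B * (log r - log r') := by gcongr; exact sub_div_le_log_sub_log hr hr'

theorem sum_Icc_le_mul_log_sub_log {B : ℝ} (hB : 0 < B) {r c : ℕ → ℝ} {n : ℕ}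
    (hr : ∀ t ≤ n, 0 < r t) (hstep : ∀ t < n, c (t + 1) * r t / B ≤ r t - r (t + 1)) :
    ∑ t ∈ Icc 1 n, c t ≤ B * (log (r 0) - log (r n)) := by
  induction n with
  | zero => simp
  | succ n ih =>
    rw [sum_Icc_succ_top (by omega)]
    have hprefix := ih (fun t ht => hr t (by omega)) (fun t ht => hstep t (by omega))
    have hlast := le_mul_log_sub_log_of_div_le_sub hB (hr n (by omega)) (hr (n + 1) le_rfl)
      (hstep n (by omega))
    linarith

theorem monotoneOn_Iic_of_le_succ {α : Type*} [Preorder α] {v : ℕ → α} {T : ℕ}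
    (hmono : ∀ t < T, v t ≤ v (t + 1)) : MonotoneOn v (Set.Iic T) := by
  intro s _ t htT hst
  induction t, hst using Nat.le_induction with
  | base => exact le_rfl
  | succ t _ ih =>
    have htT : t + 1 ≤ T := htT
    exact (ih (Set.mem_Iic.2 (by omega))).trans (hmono t (by omega))

theorem greedy_log_cost_bound_general
    (Q η β OPT : ℝ) (hQ : 0 < Q) (hη : 0 < η) (hβ : 1 ≤ β) (hOPT : 0 < OPT)
    (T : ℕ) (hT : 1 ≤ T)
    (v : ℕ → ℝ) (c : ℕ → ℝ)
    (hv0 : v 0 = 0)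
    (hmono : ∀ t, t < T → v t ≤ v (t + 1))
    (hprog : ∀ t, t < T → v t < Q →
      c (t + 1) * (Q - v t) / (β * OPT) ≤ v (t + 1) - v t)
    (hcle : ∀ t ∈ Finset.Icc 1 T, c t ≤ β * OPT)
    (hbefore : v (T - 1) < Q)
    (hgap : ∀ t, t ≤ T → Q - η ≤ v t → Q ≤ v t) :
    ∑ t ∈ Finset.Icc 1 T, c t ≤ β * (Real.log (Q / η) + 1) * OPT := by
  obtain ⟨n, rfl⟩ : ∃ n, T = n + 1 := ⟨T - 1, by omega⟩
  rw [Nat.add_sub_cancel] at hbefore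
  have hB : 0 < β * OPT := mul_pos (by linarith) hOPT
  have hbelow : ∀ t ≤ n, v t < Q := fun t ht =>
    (monotoneOn_Iic_of_le_succ hmono (Set.mem_Iic.2 (by omega)) (Set.mem_Iic.2 (by omega)) ht).trans_lt
      hbefore
  have hfirst : ∑ t ∈ Icc 1 n, c t ≤ β * OPT * (log (Q - v 0) - log (Q - v n)) :=
    sum_Icc_le_mul_log_sub_log hB (fun t ht => sub_pos.2 (hbelow t ht))
      (fun t ht => (hprog t (by omega) (hbelow t ht.le)).trans_eq (by ring))
  have hresidual : η ≤ Q - v n := by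
    by_contra! h
    linarith [hgap n (by omega) (by linarith)]
  have hlog : log (Q - v 0) - log (Q - v n) ≤ log (Q / η) := by
    rw [hv0, sub_zero, log_div hQ.ne' hη.ne']
    linarith [log_le_log hη hresidual]
  have hlast : c (n + 1) ≤ β * OPT := hcle (n + 1) (mem_Icc.2 ⟨by omega, le_rfl⟩)
  rw [sum_Icc_succ_top (by omega)]
  linarith [mul_le_mul_of_nonneg_left hlog hB.le]

/-- Greedy progress implies logarithmic cost bound (abstract form). -/
theorem greedy_log_cost_bound
    (Q η β OPT : ℝ) (hQ : 0 < Q) (hη : 0 < η) (hβ : 1 ≤ β) (hOPT : 0 < OPT)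
    (T : ℕ) (hT : 1 ≤ T)
    (v : ℕ → ℝ) (c : ℕ → ℝ)
    (hv0 : v 0 = 0)
    (hmono : ∀ t, t < T → v t ≤ v (t + 1))
    (hvQ : v T ≤ Q)
    (hcpos : ∀ t ∈ Finset.Icc 1 T, 0 < c t)
    (hprog : ∀ t, t < T → v t < Q →
      c (t + 1) * (Q - v t) / (β * OPT) ≤ v (t + 1) - v t)
    (hcle : ∀ t ∈ Finset.Icc 1 T, c t ≤ β * OPT)
    (hend : Q ≤ v T) (hbefore : v (T - 1) < Q)
    (hgap : ∀ t, t ≤ T → Q - η ≤ v t → Q ≤ v t) :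
    ∑ t ∈ Finset.Icc 1 T, c t ≤ β * (Real.log (Q / η) + 1) * OPT :=
  greedy_log_cost_bound_general Q η β OPT hQ hη hβ hOPT T hT v c hv0 hmono hprog hcle hbefore hgap
end
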